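/- Let 1 ≤ d ≤ 2(q−1) and d^⊥ = 2(q²−1)−d. There exists a homogeneous polynomial f ∈ S of degree d whose coefficient of x₂^d is nonzero and such that ev(f) ∈ (PRM_{d^⊥}(q²,2))^q if and only if d ≡ 0 (mod q−1). -/

import Mathlib

/-!
If `ev f = (ev g)^q` with `g` homogeneous of degree `2(q² - 1) - d`, then
`f(P) P₂^{qd} = (g(P) P₂^d)^q` at every point `P`; sum both sides over the points of the plane,
using that `x ↦ x^q` is additive. On the right, `g x₂^d` has degree `2(q² - 1)`, a multiple of
`q² - 1`, so its projective sum is minus its affine sum over `F³`, which vanishes by the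
Chevalley–Warning degree bound. On the left, a monomial `x^m x₂^{qd}` of `f x₂^{qd}` sums to `0`
unless `m = d e₂`, because `q² - 1 ∤ m₂ + qd` when `q - 1 ∤ d`; so the sum is the coefficient
of `x₂^d` in `f`, which is therefore zero. Conversely, if `q - 1 ∣ d` then
`x₂^d = (x₂^{2(q²-1)-d})^q` as functions on `F³`.
-/

open MvPolynomial

/-- The fixed representatives of the points of the projective plane over `F`:
the leftmost nonzero coordinate equals 1. -/
def stdRep (F : Type*) [Field F] : Set (Fin 3 → F) :=
  {v | v 0 = 1 ∨ (v 0 = 0 ∧ v 1 = 1) ∨ (v 0 = 0 ∧ v 1 = 0 ∧ v 2 = 1)}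

/-- The evaluation map at the fixed representatives. -/
noncomputable def ev (F : Type*) [Field F] :
    MvPolynomial (Fin 3) F →ₗ[F] (stdRep F → F) :=
  LinearMap.pi fun Q => (aeval (Q : Fin 3 → F)).toLinearMap

/-- The projective Reed–Muller code of degree `d` over the projective plane. -/
noncomputable def PRM (F : Type*) [Field F] (d : ℕ) : Submodule F (stdRep F → F) :=
  (homogeneousSubmodule (Fin 3) F d).map (ev F)

/-- The componentwise `q`-th power of a set of vectors. -/
def powq {F : Type*} [Field F] (q : ℕ) (Cset : Set (stdRep F → F)) :
    Set (stdRep F → F) :=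
  {v | ∃ w ∈ Cset, v = fun i => (w i) ^ q}

open Finset

section PowerSums

variable {K : Type*} [Field K] [Fintype K]

theorem FiniteField.sum_pow_eq_ite {k : ℕ} (hk : k ≠ 0) :
    ∑ u : K, u ^ k = if Fintype.card K - 1 ∣ k then -1 else 0 := by
  classical
  rw [← FiniteField.sum_pow_units, ← Fintype.sum_subtype_add_sum_subtype (· ≠ 0),
    ← Fintype.sum_equiv unitsEquivNeZero (fun u : Kˣ => (u : K) ^ k) _ (fun _ => rfl),
    add_eq_left]
  exact sum_eq_zero fun x _ => by rw [not_ne_iff.mp x.2, zero_pow hk]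

theorem FiniteField.sum_pow_eq_neg_one {k : ℕ} (hk0 : k ≠ 0) (hk : Fintype.card K - 1 ∣ k) :
    ∑ u : K, u ^ k = -1 := by
  rw [sum_pow_eq_ite hk0, if_pos hk]

theorem FiniteField.sum_pow_eq_zero_of_not_dvd {k : ℕ} (hk : ¬ Fintype.card K - 1 ∣ k) :
    ∑ u : K, u ^ k = 0 := by
  rw [sum_pow_eq_ite (by rintro rfl; exact hk (dvd_zero _)), if_neg hk]

theorem FiniteField.pow_add_card_sub_one_mul {a : ℕ} (ha : a ≠ 0) (t : K) (j : ℕ) :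
    t ^ (a + (Fintype.card K - 1) * j) = t ^ a := by
  rcases eq_or_ne t 0 with rfl | ht
  · rw [zero_pow ha, zero_pow (by omega)]
  · rw [pow_add, pow_mul, pow_card_sub_one_eq_one t ht, one_pow, mul_one]

theorem FiniteField.exists_ringHom_eq_pow_of_dvd_card {q : ℕ} (hq : q ∣ Fintype.card K) :
    ∃ σ : K →+* K, ∀ x, σ x = x ^ q := by
  obtain ⟨p, _, n, hp, hcard⟩ := card' K
  obtain ⟨k, -, rfl⟩ := (Nat.dvd_prime_pow hp).mp (hcard ▸ hq)
  have : Fact p.Prime := ⟨hp⟩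
  exact ⟨iterateFrobenius K p k, fun x => iterateFrobenius_def ..⟩

end PowerSums

section ChartSum

open FiniteField

variable {F : Type*} [Field F] [Fintype F]

/-- `∑ φ(P)` over the representatives `P ∈ stdRep F`, listed chart by chart. -/
def chartSum (φ : (Fin 3 → F) → F) : F :=
  ∑ s : F, ∑ t : F, φ ![1, s, t] + ∑ t : F, φ ![0, 1, t] + φ ![0, 0, 1]

theorem chartSum_congr {φ ψ : (Fin 3 → F) → F} (h : ∀ v ∈ stdRep F, φ v = ψ v) :
    chartSum φ = chartSum ψ := by
  simp only [chartSum]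
  rw [h _ (Or.inr (Or.inr ⟨rfl, rfl, rfl⟩))]
  congr 2
  · exact sum_congr rfl fun s _ => sum_congr rfl fun t _ => h _ (Or.inl rfl)
  · exact sum_congr rfl fun t _ => h _ (Or.inr (Or.inl ⟨rfl, rfl⟩))

theorem map_chartSum (σ : F →+* F) (φ : (Fin 3 → F) → F) :
    σ (chartSum φ) = chartSum (fun v => σ (φ v)) := by
  simp only [chartSum, map_add, map_sum]

theorem chartSum_sum {ι : Type*} (s : Finset ι) (φ : ι → (Fin 3 → F) → F) :
    chartSum (fun v => ∑ i ∈ s, φ i v) = ∑ i ∈ s, chartSum (φ i) := by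
  simp only [chartSum, sum_add_distrib]
  rw [sum_comm (s := s), sum_comm (s := s)]
  simp only [sum_comm (t := s)]

theorem chartSum_const_mul (c : F) (φ : (Fin 3 → F) → F) :
    chartSum (fun v => c * φ v) = c * chartSum φ := by
  simp only [chartSum, mul_sum, mul_add]

theorem chartSum_eval_mul_pow (h : MvPolynomial (Fin 3) F) (e : ℕ) :
    chartSum (fun v => eval v h * v 2 ^ e) =
      ∑ m ∈ h.support,
        coeff m h * chartSum (fun v => v 0 ^ m 0 * v 1 ^ m 1 * v 2 ^ (m 2 + e)) := by
  simp only [← chartSum_const_mul, ← chartSum_sum]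
  congr 1
  funext v
  simp only [eval_eq', Fin.prod_univ_three, sum_mul, pow_add]
  exact sum_congr rfl fun m _ => by ring

theorem chartSum_monomial (a b c : ℕ) :
    chartSum (fun v : Fin 3 → F => v 0 ^ a * v 1 ^ b * v 2 ^ c) =
      (∑ u : F, u ^ b) * (∑ u : F, u ^ c) + 0 ^ a * ∑ u : F, u ^ c + 0 ^ a * 0 ^ b := by
  simp [chartSum, sum_mul_sum, ← mul_sum]

theorem chartSum_monomial_of_not_dvd {a b c : ℕ} (hc : ¬ Fintype.card F - 1 ∣ c) :
    chartSum (fun v : Fin 3 → F => v 0 ^ a * v 1 ^ b * v 2 ^ c) =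
      if a = 0 ∧ b = 0 then 1 else 0 := by
  rw [chartSum_monomial, sum_pow_eq_zero_of_not_dvd hc]
  rcases eq_or_ne a 0 with rfl | ha <;> rcases eq_or_ne b 0 with rfl | hb <;> simp [*]

/-- The right side is minus the affine sum `∑_{v ∈ F³} v^m`: each nonzero `v` is one of the
`|F| - 1` multiples of a representative, all with the same value `v^m`. -/
theorem chartSum_monomial_of_dvd {a b c : ℕ} (hN : Fintype.card F - 1 ∣ a + b + c)
    (h0 : a + b + c ≠ 0) :
    chartSum (fun v : Fin 3 → F => v 0 ^ a * v 1 ^ b * v 2 ^ c) =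
      -((∑ u : F, u ^ a) * (∑ u : F, u ^ b) * ∑ u : F, u ^ c) := by
  rw [chartSum_monomial]
  set N := Fintype.card F - 1
  rcases eq_or_ne a 0 with rfl | ha
  · rcases eq_or_ne b 0 with rfl | hb
    · rw [zero_add, zero_add] at hN h0
      simp [sum_pow_eq_neg_one h0 hN]
    by_cases hNb : N ∣ b
    · simp [sum_pow_eq_neg_one hb hNb, zero_pow hb]
    · have hNc : ¬ N ∣ c := fun hNc => hNb ((Nat.dvd_add_left hNc).mp (by simpa using hN))
      simp [sum_pow_eq_zero_of_not_dvd hNc, hb]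
  · rw [zero_pow ha]
    by_cases hNa : N ∣ a
    · simp [sum_pow_eq_neg_one ha hNa]
    · have : ¬ (N ∣ b ∧ N ∣ c) := fun ⟨hNb, hNc⟩ =>
        hNa ((Nat.dvd_add_left hNb).mp ((Nat.dvd_add_left hNc).mp hN))
      rw [sum_pow_eq_zero_of_not_dvd hNa]
      rcases not_and_or.mp this with hNb | hNc
      · simp [sum_pow_eq_zero_of_not_dvd hNb]
      · simp [sum_pow_eq_zero_of_not_dvd hNc]

theorem chartSum_monomial_eq_zero {a b c : ℕ} (hN : Fintype.card F - 1 ∣ a + b + c)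
    (h0 : a + b + c ≠ 0) (hlt : a + b + c < 3 * (Fintype.card F - 1)) :
    chartSum (fun v : Fin 3 → F => v 0 ^ a * v 1 ^ b * v 2 ^ c) = 0 := by
  rw [chartSum_monomial_of_dvd hN h0, neg_eq_zero]
  by_cases ha : a < Fintype.card F - 1
  · simp [sum_pow_lt_card_sub_one F a ha]
  by_cases hb : b < Fintype.card F - 1
  · simp [sum_pow_lt_card_sub_one F b hb]
  · simp [sum_pow_lt_card_sub_one F c (by omega)]

theorem MvPolynomial.IsHomogeneous.add_add_eq_of_mem_support {R : Type*} [CommSemiring R]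
    {h : MvPolynomial (Fin 3) R} {n : ℕ} (hh : h.IsHomogeneous n) {m : Fin 3 →₀ ℕ}
    (hm : m ∈ h.support) : m 0 + m 1 + m 2 = n := by
  rw [← Fin.sum_univ_three, ← Finsupp.degree_eq_sum, Finsupp.degree_eq_weight_one]
  exact hh (mem_support_iff.mp hm)

theorem chartSum_eval_mul_pow_eq_coeff {f : MvPolynomial (Fin 3) F} {d e : ℕ}
    (hf : f.IsHomogeneous d) (he : ∀ k ≤ d, ¬ Fintype.card F - 1 ∣ k + e) :
    chartSum (fun v => eval v f * v 2 ^ e) = coeff (Finsupp.single 2 d) f := by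
  have key : ∀ m ∈ f.support, (m 0 = 0 ∧ m 1 = 0 ↔ m = Finsupp.single 2 d) := by
    intro m hm
    have hdeg := hf.add_add_eq_of_mem_support hm
    constructor
    · rintro ⟨h0, h1⟩
      ext i
      fin_cases i <;> simp [h0, h1]
      omega
    · rintro rfl
      simp
  rw [chartSum_eval_mul_pow]
  calc ∑ m ∈ f.support, coeff m f *
        chartSum (fun v => v 0 ^ m 0 * v 1 ^ m 1 * v 2 ^ (m 2 + e))
      = ∑ m ∈ f.support, if Finsupp.single 2 d = m then coeff m f else 0 := by
        refine sum_congr rfl fun m hm => ?_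
        have hdeg := hf.add_add_eq_of_mem_support hm
        rw [chartSum_monomial_of_not_dvd (he _ (by omega)), mul_ite, mul_one, mul_zero]
        exact if_congr ((key m hm).trans eq_comm) rfl rfl
    _ = coeff (Finsupp.single 2 d) f := by
        rw [sum_ite_eq, ite_eq_left_iff]
        exact fun h => (notMem_support_iff.mp h).symm

theorem chartSum_eval_mul_pow_eq_zero {g : MvPolynomial (Fin 3) F} {n e : ℕ}
    (hg : g.IsHomogeneous n) (hne : n + e = 2 * (Fintype.card F - 1)) :
    chartSum (fun v => eval v g * v 2 ^ e) = 0 := by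
  have hF : 1 < Fintype.card F := Fintype.one_lt_card
  rw [chartSum_eval_mul_pow]
  refine sum_eq_zero fun m hm => ?_
  have hdeg := hg.add_add_eq_of_mem_support hm
  rw [chartSum_monomial_eq_zero ⟨2, by omega⟩ (by omega) (by omega), mul_zero]

end ChartSum

theorem sq_sub_one_not_dvd_add_mul {q d k : ℕ} (hd : 1 ≤ d) (hd2 : d ≤ 2 * (q - 1))
    (hnd : ¬ q - 1 ∣ d) (hk : k ≤ d) : ¬ q ^ 2 - 1 ∣ k + q * d := by
  obtain ⟨r, rfl⟩ : ∃ r, q = r + 2 := ⟨q - 2, by omega⟩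
  have hN : (r + 2) ^ 2 - 1 = (r + 1) * (r + 3) := by
    have : (r + 2) ^ 2 = (r + 1) * (r + 3) + 1 := by ring
    omega
  rw [show r + 2 - 1 = r + 1 by omega] at hd2 hnd
  have hd1 : d ≠ r + 1 := fun h => hnd ⟨1, by omega⟩
  have hd2' : d ≠ 2 * (r + 1) := fun h => hnd ⟨2, by omega⟩
  rw [hN]
  rintro ⟨c, hc⟩
  rcases Nat.lt_or_ge c 3 with hc3 | hc3
  · interval_cases c
    · nlinarith
    · rcases Nat.lt_or_ge d (r + 1) with h | h
      · nlinarith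
      · nlinarith [lt_of_le_of_ne h (Ne.symm hd1)]
    · nlinarith [lt_of_le_of_ne hd2 hd2']
  · nlinarith [Nat.mul_le_mul_left ((r + 1) * (r + 3)) hc3, Nat.mul_le_mul_left (r + 3) hd2]

section Plane

variable {F : Type*} [Field F] [Fintype F] {q : ℕ}

theorem sub_one_dvd_of_eval_eq_pow (hq : Fintype.card F = q ^ 2) {d : ℕ} (h1 : 1 ≤ d)
    (h2 : d ≤ 2 * (q - 1)) {f g : MvPolynomial (Fin 3) F} (hf : f.IsHomogeneous d)
    (hg : g.IsHomogeneous (2 * (q ^ 2 - 1) - d)) (hfg : ∀ v ∈ stdRep F, eval v f = eval v g ^ q)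
    (hcoeff : coeff (Finsupp.single 2 d) f ≠ 0) : q - 1 ∣ d := by
  by_contra hnd
  obtain ⟨σ, hσ⟩ :=
    FiniteField.exists_ringHom_eq_pow_of_dvd_card (hq ▸ dvd_pow_self q two_ne_zero)
  have hpt : ∀ v ∈ stdRep F, eval v f * v 2 ^ (q * d) = σ (eval v g * v 2 ^ d) := by
    intro v hv
    rw [hfg v hv, hσ, mul_pow, ← pow_mul, mul_comm d]
  have hf_sum : ∀ k ≤ d, ¬ Fintype.card F - 1 ∣ k + q * d := fun k hk => by
    rw [hq]; exact sq_sub_one_not_dvd_add_mul h1 h2 hnd hk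
  have hdeg : 2 * (q ^ 2 - 1) - d + d = 2 * (Fintype.card F - 1) := by
    rw [hq]; have := Nat.le_self_pow two_ne_zero q; omega
  apply hcoeff
  rw [← chartSum_eval_mul_pow_eq_coeff hf hf_sum, chartSum_congr hpt, ← map_chartSum,
    chartSum_eval_mul_pow_eq_zero hg hdeg, map_zero]

theorem pow_mul_sub_one_eq_pow_pow (hq : Fintype.card F = q ^ 2) {k : ℕ}
    (hk0 : 1 ≤ (q - 1) * k) (hk : k ≤ 2) (t : F) :
    t ^ ((q - 1) * k) = (t ^ (2 * (q ^ 2 - 1) - (q - 1) * k)) ^ q := by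
  have hq1 : 1 ≤ q - 1 := Nat.pos_of_mul_pos_right hk0
  have hle : (q - 1) * k ≤ 2 * (q ^ 2 - 1) := by
    have : (q - 1) * k ≤ (q - 1) * 2 := Nat.mul_le_mul_left _ hk
    have : q - 1 ≤ q ^ 2 - 1 := Nat.sub_le_sub_right (Nat.le_self_pow two_ne_zero q) 1
    omega
  have hexp : (2 * (q ^ 2 - 1) - (q - 1) * k) * q =
      (q - 1) * k + (Fintype.card F - 1) * (2 * q - k) := by
    rw [hq]
    zify [hle, (by omega : k ≤ 2 * q), (by omega : 1 ≤ q),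
      (Nat.one_le_pow _ _ (by omega) : 1 ≤ q ^ 2)]
    ring
  rw [← pow_mul, hexp, FiniteField.pow_add_card_sub_one_mul (by omega)]

end Plane

theorem ev_apply {F : Type*} [Field F] (f : MvPolynomial (Fin 3) F) (P : stdRep F) :
    ev F f P = eval (P : Fin 3 → F) f := by
  simp [ev]

/-- for `1 ≤ d ≤ 2(q−1)`, there is a homogeneous polynomial `f` of
degree `d` with nonzero coefficient on `x₂^d` and `ev(f) ∈ (PRM_{d^⊥}(q²,2))^q`
if and only if `d ≡ 0 (mod q−1)`. -/
theorem stmt13 {F : Type*} [Field F] [Fintype F] (q d : ℕ)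
    (hq : Fintype.card F = q ^ 2) (h1 : 1 ≤ d) (h2 : d ≤ 2 * (q - 1)) :
    (∃ f : MvPolynomial (Fin 3) F, f ∈ homogeneousSubmodule (Fin 3) F d ∧
      coeff (Finsupp.single 2 d) f ≠ 0 ∧
      ev F f ∈ powq q (PRM F (2 * (q ^ 2 - 1) - d) : Set (stdRep F → F))) ↔
      d ≡ 0 [MOD q - 1] := by
  rw [Nat.modEq_zero_iff_dvd]
  constructor
  · rintro ⟨f, hf, hcoeff, _, ⟨g, hg, rfl⟩, hfg⟩
    refine sub_one_dvd_of_eval_eq_pow hq h1 h2 hf hg (fun v hv => ?_) hcoeff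
    simpa only [ev_apply] using congrFun hfg ⟨v, hv⟩
  · rintro ⟨k, rfl⟩
    have hk : k ≤ 2 :=
      Nat.le_of_mul_le_mul_left (by rwa [mul_comm 2] at h2) (Nat.pos_of_mul_pos_right h1)
    refine ⟨X 2 ^ ((q - 1) * k), isHomogeneous_X_pow _ _, by simp [coeff_X_pow], _,
      Submodule.mem_map_of_mem (isHomogeneous_X_pow 2 (2 * (q ^ 2 - 1) - (q - 1) * k)), ?_⟩
    funext P
    simp only [ev_apply, map_pow, eval_X]
    exact pow_mul_sub_one_eq_pow_pow hq h1 hk _
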